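/- arXiv:2303.14195 — 3 statements merged into one kernel-verified Lean document; each statement's English description precedes it below -/
import Mathlib

section
/- Let Ψ be a d×d diagonal matrix with positive entries, W a d×p matrix, M = I_p + WᵀΨ⁻¹W, and L = Ψ⁻¹WM⁻¹. If x ∼ N(0, Ψ⁻¹) and ε ∼ N(0, I_p) are independent Gaussian vectors, then x⁺ = (I_d − LWᵀ)x + Lε has mean zero and covariance E[x⁺(x⁺)ᵀ] = (WWᵀ + Ψ)⁻¹. -/
/-!
Stacking `x` and `ε` into one random vector `z`, the update is linear, `x⁺ = [1 - LWᵀ | L] z`,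
so `x⁺` is centred and its second moment is `(1 - LWᵀ) Ψ⁻¹ (1 - LWᵀ)ᵀ + L Lᵀ`, the Joseph form
of a Kalman covariance update with prior covariance `Ψ⁻¹`, observation matrix `Wᵀ`, unit noise and
gain `L`. Since `L M = Ψ⁻¹ W`, the Joseph form collapses to `Ψ⁻¹ - L Wᵀ Ψ⁻¹`, which is
`(W Wᵀ + Ψ)⁻¹` by the Woodbury identity.
-/

open Matrix MeasureTheory

namespace Matrix

theorem PosSemidef.posDef_one_add_transpose_mul_mul {d p : Type*} [Fintype d] [Fintype p]
    [DecidableEq p] {P : Matrix d d ℝ} (hP : P.PosSemidef) (W : Matrix d p ℝ) :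
    (1 + Wᵀ * P * W).PosDef :=
  PosDef.one.add_posSemidef (hP.conjTranspose_mul_mul_same W)

variable {R : Type*} [CommRing R] {d p : Type*} [Fintype d] [DecidableEq d] [Fintype p]
  [DecidableEq p]

theorem joseph_form_eq_sub {P : Matrix d d R} {W : Matrix d p R} {L : Matrix d p R}
    (hL : L * (1 + Wᵀ * P * W) = P * W) :
    (1 - L * Wᵀ) * P * (1 - L * Wᵀ)ᵀ + L * Lᵀ = P - L * Wᵀ * P := by
  have hLPW : L * Wᵀ * P * W * Lᵀ + L * Lᵀ = P * W * Lᵀ := by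
    rw [← hL]
    simp only [Matrix.mul_add, Matrix.add_mul, Matrix.mul_one, Matrix.mul_assoc]
    abel
  rw [transpose_sub, transpose_one, transpose_mul, transpose_transpose]
  calc (1 - L * Wᵀ) * P * (1 - W * Lᵀ) + L * Lᵀ
      = P - L * Wᵀ * P - P * W * Lᵀ + (L * Wᵀ * P * W * Lᵀ + L * Lᵀ) := by
        simp only [Matrix.sub_mul, Matrix.mul_sub, Matrix.one_mul, Matrix.mul_one,
          Matrix.mul_assoc]
        abel
    _ = P - L * Wᵀ * P := by rw [hLPW]; abel

theorem joseph_form_eq_inv {Ψ : Matrix d d R} {W : Matrix d p R} {M : Matrix p p R}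
    {L : Matrix d p R} (hΨ : IsUnit Ψ) (hM : M = 1 + Wᵀ * Ψ⁻¹ * W) (hMu : IsUnit M)
    (hL : L = Ψ⁻¹ * W * M⁻¹) :
    (1 - L * Wᵀ) * Ψ⁻¹ * (1 - L * Wᵀ)ᵀ + L * Lᵀ = (W * Wᵀ + Ψ)⁻¹ := by
  have hLM : L * M = Ψ⁻¹ * W := by
    rw [hL, Matrix.mul_assoc, nonsing_inv_mul _ ((isUnit_iff_isUnit_det M).mp hMu),
      Matrix.mul_one]
  have hwoodbury := add_mul_mul_inv_eq_sub Ψ W 1 Wᵀ hΨ isUnit_one (by rwa [inv_one, ← hM])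
  rw [Matrix.mul_one, inv_one, ← hM] at hwoodbury
  rw [joseph_form_eq_sub (hM ▸ hLM), add_comm, hwoodbury, hL]

end Matrix

namespace MeasureTheory

variable {Ω : Type*} [MeasurableSpace Ω] {μ : Measure Ω} {m n : Type*}

noncomputable def secondMoment (μ : Measure Ω) (z : Ω → n → ℝ) : Matrix n n ℝ :=
  of fun k l => ∫ ω, z ω k * z ω l ∂μ

theorem integral_mulVec [Fintype n] (A : Matrix m n ℝ) {z : Ω → n → ℝ}
    (hz : ∀ k, Integrable (fun ω => z ω k) μ) :
    (fun i => ∫ ω, (A *ᵥ z ω) i ∂μ) = A *ᵥ fun k => ∫ ω, z ω k ∂μ := by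
  ext i
  simp only [mulVec, dotProduct]
  rw [integral_finsetSum _ fun k _ => (hz k).const_mul _]
  simp_rw [integral_const_mul]

theorem secondMoment_mulVec [Fintype n] (A : Matrix m n ℝ) {z : Ω → n → ℝ}
    (hzz : ∀ k l, Integrable (fun ω => z ω k * z ω l) μ) :
    secondMoment μ (fun ω => A *ᵥ z ω) = A * secondMoment μ z * Aᵀ := by
  ext i j
  have hexpand : ∀ ω, (A *ᵥ z ω) i * (A *ᵥ z ω) j
      = ∑ k, ∑ l, A i k * A j l * (z ω k * z ω l) := fun ω => by
    simp only [mulVec, dotProduct, Finset.sum_mul_sum]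
    exact Finset.sum_congr rfl fun k _ => Finset.sum_congr rfl fun l _ => by ring
  simp only [secondMoment, of_apply, hexpand, mul_apply, transpose_apply, Finset.sum_mul]
  rw [integral_finsetSum _ fun k _ => integrable_finsetSum _ fun l _ => (hzz k l).const_mul _]
  conv_rhs => rw [Finset.sum_comm]
  refine Finset.sum_congr rfl fun k _ => ?_
  rw [integral_finsetSum _ fun l _ => (hzz k l).const_mul _]
  exact Finset.sum_congr rfl fun l _ => by rw [integral_const_mul]; ring

theorem integrable_sumElim_mul_sumElim {x : Ω → m → ℝ} {y : Ω → n → ℝ}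
    (hxx : ∀ i i', Integrable (fun ω => x ω i * x ω i') μ)
    (hxy : ∀ i j, Integrable (fun ω => x ω i * y ω j) μ)
    (hyy : ∀ j j', Integrable (fun ω => y ω j * y ω j') μ) :
    ∀ k l, Integrable (fun ω => Sum.elim (x ω) (y ω) k * Sum.elim (x ω) (y ω) l) μ := by
  rintro (i | j) (i' | j')
  exacts [hxx i i', hxy i j', by simpa only [Sum.elim_inl, Sum.elim_inr, mul_comm] using hxy i' j,
    hyy j j']

theorem secondMoment_sumElim {x : Ω → m → ℝ} {y : Ω → n → ℝ}
    (hxy : ∀ i j, ∫ ω, x ω i * y ω j ∂μ = 0) :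
    secondMoment μ (fun ω => Sum.elim (x ω) (y ω))
      = fromBlocks (secondMoment μ x) 0 0 (secondMoment μ y) := by
  ext (i | j) (i' | j')
  · rfl
  · exact hxy i j'
  · show ∫ ω, y ω j * x ω i' ∂μ = 0
    simpa only [mul_comm] using hxy i' j
  · rfl

end MeasureTheory

theorem stmt_1_general {d p : ℕ} (ψ : Fin d → ℝ) (hψ : ∀ i, 0 < ψ i)
    (Ψ : Matrix (Fin d) (Fin d) ℝ) (hΨ : Ψ = Matrix.diagonal ψ)
    (W : Matrix (Fin d) (Fin p) ℝ)
    (M : Matrix (Fin p) (Fin p) ℝ) (hM : M = 1 + Wᵀ * Ψ⁻¹ * W)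
    (L : Matrix (Fin d) (Fin p) ℝ) (hL : L = Ψ⁻¹ * W * M⁻¹)
    {Ω : Type*} [MeasurableSpace Ω] (μ : Measure Ω)
    (x : Ω → Fin d → ℝ) (ε : Ω → Fin p → ℝ)
    (hxInt : ∀ i, Integrable (fun ω => x ω i) μ)
    (hεInt : ∀ j, Integrable (fun ω => ε ω j) μ)
    (hxxInt : ∀ i i', Integrable (fun ω => x ω i * x ω i') μ)
    (hεεInt : ∀ j j', Integrable (fun ω => ε ω j * ε ω j') μ)
    (hxεInt : ∀ i j, Integrable (fun ω => x ω i * ε ω j) μ)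
    (hxmean : ∀ i, ∫ ω, x ω i ∂μ = 0)
    (hεmean : ∀ j, ∫ ω, ε ω j ∂μ = 0)
    (hxcov : ∀ i i', ∫ ω, x ω i * x ω i' ∂μ = Ψ⁻¹ i i')
    (hεcov : ∀ j j', ∫ ω, ε ω j * ε ω j' ∂μ = (1 : Matrix (Fin p) (Fin p) ℝ) j j')
    (hindep : ∀ i j, ∫ ω, x ω i * ε ω j ∂μ = 0)
    (xplus : Ω → Fin d → ℝ)
    (hxplus : ∀ ω, xplus ω = (1 - L * Wᵀ) *ᵥ x ω + L *ᵥ ε ω) :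
    (∀ i, ∫ ω, xplus ω i ∂μ = 0) ∧
    (∀ i i', ∫ ω, xplus ω i * xplus ω i' ∂μ = (W * Wᵀ + Ψ)⁻¹ i i') := by
  set z : Ω → Fin d ⊕ Fin p → ℝ := fun ω => Sum.elim (x ω) (ε ω)
  have hxplus_z : xplus = fun ω => fromCols (1 - L * Wᵀ) L *ᵥ z ω :=
    funext fun ω => by rw [hxplus, fromCols_mulVec_sumElim]
  have hΨpd : Ψ.PosDef := hΨ ▸ posDef_diagonal_iff.mpr hψ
  have hMpd : M.PosDef := hM ▸ hΨpd.inv.posSemidef.posDef_one_add_transpose_mul_mul W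
  constructor
  · have hzmean : (fun k => ∫ ω, z ω k ∂μ) = 0 := by
      ext (i | j)
      exacts [hxmean i, hεmean j]
    have hzInt : ∀ k, Integrable (fun ω => z ω k) μ := by
      rintro (i | j)
      exacts [hxInt i, hεInt j]
    intro i
    rw [hxplus_z]
    simpa [hzmean] using congrFun (integral_mulVec (fromCols (1 - L * Wᵀ) L) hzInt) i
  · have hzcov : secondMoment μ z = fromBlocks Ψ⁻¹ 0 0 1 := by
      rw [secondMoment_sumElim hindep]
      congr <;> ext <;> simp only [secondMoment, of_apply, hxcov, hεcov]
    intro i i'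
    change secondMoment μ xplus i i' = _
    rw [hxplus_z, secondMoment_mulVec _ (integrable_sumElim_mul_sumElim hxxInt hxεInt hεεInt),
      hzcov, fromCols_mul_fromBlocks, transpose_fromCols, fromCols_mul_fromRows]
    simp only [Matrix.mul_zero, add_zero, zero_add, Matrix.mul_one]
    rw [joseph_form_eq_inv hΨpd.isUnit hM hMpd.isUnit hL]

/-- Ensemble sampling: if `x`, `ε` are centered, uncorrelated random vectors with
`E[xxᵀ] = Ψ⁻¹`, `E[εεᵀ] = I`, then `x⁺ = (I − LWᵀ)x + Lε` (with
`M = I + WᵀΨ⁻¹W`, `L = Ψ⁻¹WM⁻¹`) is centered with covariance `(WWᵀ + Ψ)⁻¹`. -/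
theorem stmt_1 {d p : ℕ} (ψ : Fin d → ℝ) (hψ : ∀ i, 0 < ψ i)
    (Ψ : Matrix (Fin d) (Fin d) ℝ) (hΨ : Ψ = Matrix.diagonal ψ)
    (W : Matrix (Fin d) (Fin p) ℝ)
    (M : Matrix (Fin p) (Fin p) ℝ) (hM : M = 1 + Wᵀ * Ψ⁻¹ * W)
    (L : Matrix (Fin d) (Fin p) ℝ) (hL : L = Ψ⁻¹ * W * M⁻¹)
    {Ω : Type*} [MeasurableSpace Ω] (μ : Measure Ω) [IsProbabilityMeasure μ]
    (x : Ω → Fin d → ℝ) (ε : Ω → Fin p → ℝ)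
    (hxInt : ∀ i, Integrable (fun ω => x ω i) μ)
    (hεInt : ∀ j, Integrable (fun ω => ε ω j) μ)
    (hxxInt : ∀ i i', Integrable (fun ω => x ω i * x ω i') μ)
    (hεεInt : ∀ j j', Integrable (fun ω => ε ω j * ε ω j') μ)
    (hxεInt : ∀ i j, Integrable (fun ω => x ω i * ε ω j) μ)
    (hxmean : ∀ i, ∫ ω, x ω i ∂μ = 0)
    (hεmean : ∀ j, ∫ ω, ε ω j ∂μ = 0)
    (hxcov : ∀ i i', ∫ ω, x ω i * x ω i' ∂μ = Ψ⁻¹ i i')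
    (hεcov : ∀ j j', ∫ ω, ε ω j * ε ω j' ∂μ = (1 : Matrix (Fin p) (Fin p) ℝ) j j')
    (hindep : ∀ i j, ∫ ω, x ω i * ε ω j ∂μ = 0)
    (xplus : Ω → Fin d → ℝ)
    (hxplus : ∀ ω, xplus ω = (1 - L * Wᵀ) *ᵥ x ω + L *ᵥ ε ω) :
    (∀ i, ∫ ω, xplus ω i ∂μ = 0) ∧
    (∀ i i', ∫ ω, xplus ω i * xplus ω i' ∂μ = (W * Wᵀ + Ψ)⁻¹ i i') :=
  stmt_1_general ψ hψ Ψ hΨ W M hM L hL μ x ε hxInt hεInt hxxInt hεεInt hxεInt hxmean hεmean hxcov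
    hεcov hindep xplus hxplus
end

section
/- Let S be symmetric d×d, Ψ diagonal positive definite, W a d×p matrix, M = I_p + WᵀΨ⁻¹W. Suppose W satisfies the MLE fixed-point equation W = S(WWᵀ + Ψ)⁻¹W. Then W also satisfies the EM fixed-point equation W = SΨ⁻¹W(I_p + M⁻¹WᵀΨ⁻¹SΨ⁻¹W)⁻¹, provided I_p + M⁻¹WᵀΨ⁻¹SΨ⁻¹W is invertible. -/
open Matrix

/-- If `W` satisfies the MLE fixed-point equation `W = S(WWᵀ+Ψ)⁻¹W`, then `W`
satisfies the EM fixed-point equation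
`W = SΨ⁻¹W (I + M⁻¹WᵀΨ⁻¹SΨ⁻¹W)⁻¹`, provided the latter inner matrix is invertible. -/
theorem stmt_6 {d p : ℕ} (S : Matrix (Fin d) (Fin d) ℝ) (hS : S.IsSymm)
    (ψ : Fin d → ℝ) (hψ : ∀ i, 0 < ψ i)
    (Ψ : Matrix (Fin d) (Fin d) ℝ) (hΨ : Ψ = Matrix.diagonal ψ)
    (W : Matrix (Fin d) (Fin p) ℝ)
    (M : Matrix (Fin p) (Fin p) ℝ) (hM : M = 1 + Wᵀ * Ψ⁻¹ * W)
    (hfix : W = S * (W * Wᵀ + Ψ)⁻¹ * W)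
    (hinv : IsUnit (1 + M⁻¹ * Wᵀ * Ψ⁻¹ * S * Ψ⁻¹ * W)) :
    W = S * Ψ⁻¹ * W * (1 + M⁻¹ * Wᵀ * Ψ⁻¹ * S * Ψ⁻¹ * W)⁻¹ := by
  have hΨpd : Ψ.PosDef := by
    rw [hΨ]; exact Matrix.posDef_diagonal_iff.mpr hψ
  have hΨinv : IsUnit Ψ := hΨpd.isUnit
  have hΨipd : Ψ⁻¹.PosDef := hΨpd.inv
  have hWtW : (Wᵀ * Ψ⁻¹ * W).PosSemidef := by
    have := hΨipd.posSemidef.conjTranspose_mul_mul_same W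
    simpa [Matrix.conjTranspose_eq_transpose_of_trivial, Matrix.mul_assoc] using this
  have hMpd : M.PosDef := by
    rw [hM]
    exact Matrix.PosDef.add_posSemidef Matrix.PosDef.one hWtW
  have hMinv : IsUnit M := hMpd.isUnit
  have hApd : (W * Wᵀ + Ψ).PosDef := by
    have hWWt : (W * Wᵀ).PosSemidef := by
      simpa [Matrix.conjTranspose_eq_transpose_of_trivial] using Matrix.posSemidef_self_mul_conjTranspose W
    exact Matrix.PosDef.posSemidef_add hWWt hΨpd
  have hAinv : IsUnit (W * Wᵀ + Ψ) := hApd.isUnit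
  -- Woodbury: (W Wᵀ + Ψ)⁻¹ * W = Ψ⁻¹ * W * M⁻¹
  have hW : (W * Wᵀ + Ψ)⁻¹ * W = Ψ⁻¹ * W * M⁻¹ := by
    have key : (W * Wᵀ + Ψ) * (Ψ⁻¹ * W * M⁻¹) = W := by
      have h1 : (W * Wᵀ + Ψ) * (Ψ⁻¹ * W * M⁻¹)
          = (W * (Wᵀ * Ψ⁻¹ * W) + W) * M⁻¹ := by
        rw [Matrix.add_mul, Matrix.add_mul]
        have : Ψ * (Ψ⁻¹ * W * M⁻¹) = W * M⁻¹ := by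
          rw [← Matrix.mul_assoc, ← Matrix.mul_assoc,
            Matrix.mul_nonsing_inv _ ((Matrix.isUnit_iff_isUnit_det _).mp hΨinv),
            Matrix.one_mul]
        rw [this]
        simp [Matrix.mul_assoc]
      rw [h1]
      have h2 : W * (Wᵀ * Ψ⁻¹ * W) + W = W * M := by
        rw [hM, Matrix.mul_add, Matrix.mul_one, add_comm]
      rw [h2, Matrix.mul_assoc,
        Matrix.mul_nonsing_inv _ ((Matrix.isUnit_iff_isUnit_det _).mp hMinv),
        Matrix.mul_one]
    calc (W * Wᵀ + Ψ)⁻¹ * W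
        = (W * Wᵀ + Ψ)⁻¹ * ((W * Wᵀ + Ψ) * (Ψ⁻¹ * W * M⁻¹)) := by rw [key]
      _ = Ψ⁻¹ * W * M⁻¹ := by
          rw [← Matrix.mul_assoc,
            Matrix.nonsing_inv_mul _ ((Matrix.isUnit_iff_isUnit_det _).mp hAinv),
            Matrix.one_mul]
  have hfix' : W = S * Ψ⁻¹ * W * M⁻¹ := by
    calc W = S * ((W * Wᵀ + Ψ)⁻¹ * W) := by rw [← Matrix.mul_assoc]; exact hfix
      _ = S * Ψ⁻¹ * W * M⁻¹ := by rw [hW, ← Matrix.mul_assoc, ← Matrix.mul_assoc]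
  have hSW : S * Ψ⁻¹ * W = W * M := by
    calc S * Ψ⁻¹ * W = (S * Ψ⁻¹ * W * M⁻¹) * M := by
          rw [Matrix.mul_assoc _ M⁻¹ M,
            Matrix.nonsing_inv_mul _ ((Matrix.isUnit_iff_isUnit_det _).mp hMinv),
            Matrix.mul_one]
      _ = W * M := by rw [← hfix']
  -- main computation: W * (1 + X) = S Ψ⁻¹ W
  have hkey : W * (1 + M⁻¹ * Wᵀ * Ψ⁻¹ * S * Ψ⁻¹ * W) = S * Ψ⁻¹ * W := by
    have hX : M⁻¹ * Wᵀ * Ψ⁻¹ * S * Ψ⁻¹ * W = M⁻¹ * ((Wᵀ * Ψ⁻¹) * (S * Ψ⁻¹ * W)) := by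
      simp [Matrix.mul_assoc]
    rw [Matrix.mul_add, Matrix.mul_one, hX, hSW]
    have h3 : Wᵀ * Ψ⁻¹ * (W * M) = (M - 1) * M := by
      rw [← Matrix.mul_assoc, Matrix.sub_mul]
      congr 1
      rw [hM]; noncomm_ring
    rw [h3]
    have h4 : M⁻¹ * ((M - 1) * M) = M - 1 := by
      have hc : M⁻¹ * M = 1 :=
        Matrix.nonsing_inv_mul _ ((Matrix.isUnit_iff_isUnit_det _).mp hMinv)
      calc M⁻¹ * ((M - 1) * M) = (M⁻¹ * M) * M - (M⁻¹ * M) := by noncomm_ring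
        _ = M - 1 := by rw [hc, Matrix.one_mul]
    rw [h4, Matrix.mul_sub, Matrix.mul_one]; abel
  calc W = W * (1 + M⁻¹ * Wᵀ * Ψ⁻¹ * S * Ψ⁻¹ * W) * (1 + M⁻¹ * Wᵀ * Ψ⁻¹ * S * Ψ⁻¹ * W)⁻¹ := by
        rw [Matrix.mul_nonsing_inv_cancel_right _ _ ((Matrix.isUnit_iff_isUnit_det _).mp hinv)]
    _ = S * Ψ⁻¹ * W * (1 + M⁻¹ * Wᵀ * Ψ⁻¹ * S * Ψ⁻¹ * W)⁻¹ := by rw [hkey]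
end

section
/- Let S be symmetric d×d, Ψ diagonal positive definite, W a d×p matrix with M = I_p + WᵀΨ⁻¹W, and suppose W satisfies W = SΨ⁻¹WM⁻¹. Then diag(S − WWᵀ) = diag(S − WM⁻¹WᵀΨ⁻¹S), where diag(A) denotes the diagonal matrix with the same diagonal as A. -/
open Matrix

/-!
Transposing the fixed-point relation `W = S Ψ⁻¹ W M⁻¹`, with `S`, `Ψ⁻¹` and `M⁻¹` symmetric, gives
`Wᵀ = M⁻¹ Wᵀ Ψ⁻¹ S`; substituting this into `W Wᵀ` shows `W Wᵀ = W M⁻¹ Wᵀ Ψ⁻¹ S` as matrices,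
so in particular their diagonals agree.
-/

namespace Matrix

variable {m n R : Type*} [Fintype m] [CommSemiring R]

theorem IsSymm.transpose_mul_mul {A : Matrix m m R} (hA : A.IsSymm) (B : Matrix m n R) :
    (Bᵀ * A * B).IsSymm := by
  rw [IsSymm, transpose_mul, transpose_mul, hA.eq, transpose_transpose, Matrix.mul_assoc]

theorem transpose_eq_of_eq_mul_mul_mul [Fintype n] {S A : Matrix m m R} {N : Matrix n n R}
    (hS : S.IsSymm) (hA : A.IsSymm) (hN : N.IsSymm) {W : Matrix m n R}
    (hW : W = S * A * W * N) : Wᵀ = N * Wᵀ * A * S := by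
  conv_lhs => rw [hW]
  simp only [transpose_mul, hS.eq, hA.eq, hN.eq, Matrix.mul_assoc]

theorem mul_transpose_eq_of_eq_mul_mul_mul [Fintype n] {S A : Matrix m m R} {N : Matrix n n R}
    (hS : S.IsSymm) (hA : A.IsSymm) (hN : N.IsSymm) {W : Matrix m n R}
    (hW : W = S * A * W * N) : W * Wᵀ = W * N * Wᵀ * A * S := by
  conv_lhs => rw [transpose_eq_of_eq_mul_mul_mul hS hA hN hW]
  simp only [Matrix.mul_assoc]

end Matrix

theorem stmt_7_general {d p : ℕ} (S : Matrix (Fin d) (Fin d) ℝ) (hS : S.IsSymm)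
    (ψ : Fin d → ℝ)
    (Ψ : Matrix (Fin d) (Fin d) ℝ) (hΨ : Ψ = Matrix.diagonal ψ)
    (W : Matrix (Fin d) (Fin p) ℝ)
    (M : Matrix (Fin p) (Fin p) ℝ) (hM : M = 1 + Wᵀ * Ψ⁻¹ * W)
    (hfix : W = S * Ψ⁻¹ * W * M⁻¹) :
    Matrix.diagonal (fun i => (S - W * Wᵀ) i i)
      = Matrix.diagonal (fun i => (S - W * M⁻¹ * Wᵀ * Ψ⁻¹ * S) i i) := by
  have hΨinv : Ψ⁻¹.IsSymm := (hΨ ▸ isSymm_diagonal ψ).inv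
  have hMinv : M⁻¹.IsSymm := (hM ▸ isSymm_one.add (hΨinv.transpose_mul_mul W)).inv
  rw [mul_transpose_eq_of_eq_mul_mul_mul hS hΨinv hMinv hfix]

/-- Given the `W` fixed-point relation `W = SΨ⁻¹WM⁻¹`, the MLE and EM `Ψ`-updates
coincide: `diag(S − WWᵀ) = diag(S − WM⁻¹WᵀΨ⁻¹S)`. -/
theorem stmt_7 {d p : ℕ} (S : Matrix (Fin d) (Fin d) ℝ) (hS : S.IsSymm)
    (ψ : Fin d → ℝ) (hψ : ∀ i, 0 < ψ i)
    (Ψ : Matrix (Fin d) (Fin d) ℝ) (hΨ : Ψ = Matrix.diagonal ψ)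
    (W : Matrix (Fin d) (Fin p) ℝ)
    (M : Matrix (Fin p) (Fin p) ℝ) (hM : M = 1 + Wᵀ * Ψ⁻¹ * W)
    (hfix : W = S * Ψ⁻¹ * W * M⁻¹) :
    Matrix.diagonal (fun i => (S - W * Wᵀ) i i)
      = Matrix.diagonal (fun i => (S - W * M⁻¹ * Wᵀ * Ψ⁻¹ * S) i i) :=
  stmt_7_general S hS ψ Ψ hΨ W M hM hfix
end
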